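/- Let F be a finite field with char(F) ∉ {2,3}. The number of isomorphism classes among the algebras A12(β1) = (0, 1, 1, 0; β1, 0, 0, −1), for β1 ∈ F, equals 3. -/

import Mathlib

/-- The bilinear multiplication on `F²` determined by a 2×4 matrix of structure
constants `M = (α₁ α₂ α₃ α₄; β₁ β₂ β₃ β₄)`, i.e. `e₁e₁ = α₁e₁+β₁e₂`,
`e₁e₂ = α₂e₁+β₂e₂`, `e₂e₁ = α₃e₁+β₃e₂`, `e₂e₂ = α₄e₁+β₄e₂`. -/
def scMul (F : Type*) [Field F] (M : Matrix (Fin 2) (Fin 4) F)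
    (x y : Fin 2 → F) : Fin 2 → F :=
  fun i => x 0 * y 0 * M i 0 + x 0 * y 1 * M i 1 + x 1 * y 0 * M i 2 + x 1 * y 1 * M i 3

/-- Two algebras given by matrices of structure constants are isomorphic iff there is
an `F`-linear bijection `g` with `g (x·y) = g x · g y`. -/
def scIso (F : Type*) [Field F] (M N : Matrix (Fin 2) (Fin 4) F) : Prop :=
  ∃ g : (Fin 2 → F) ≃ₗ[F] (Fin 2 → F), ∀ x y, g (scMul F M x y) = scMul F N (g x) (g y)

/-!
An isomorphism `A₁₂(b) → A₁₂(b')` is determined by the images `u, v` of `e₁, e₂`, which must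
satisfy `u² = b v`, `uv = u`, `v² = -v` in `A₁₂(b')`. Solving these componentwise forces
`b = t² b'` with `t ≠ 0` (`t = u₀` if `v₀ = 0`, and `t = 2u₀` otherwise, using `2 ≠ 0`); conversely
`e₁ ↦ t e₁, e₂ ↦ e₂` is such an isomorphism. So the classes are the orbits of `F` under
multiplication by nonzero squares, i.e. the fibres of the quadratic character, which takes exactly
the three values `0, 1, -1` when `char F ≠ 2`.
-/

theorem card_quot_eq_card_range {α β : Type*} (f : α → β) :
    Nat.card (Quot fun a b => f a = f b) = Nat.card (Set.range f) :=
  Nat.card_congr (Setoid.quotientKerEquivRange f)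

section

variable {F : Type*} [Field F]

abbrev A12 (b : F) : Matrix (Fin 2) (Fin 4) F := !![0, 1, 1, 0; b, 0, 0, -1]

theorem scMul_A12 (b : F) (x y : Fin 2 → F) :
    scMul F (A12 b) x y = ![x 0 * y 1 + x 1 * y 0, b * (x 0 * y 0) - x 1 * y 1] := by
  funext i; fin_cases i
  · simp [scMul]
  · simp [scMul]; ring

theorem scMul_A12_e₁_e₁ (b : F) : scMul F (A12 b) ![1, 0] ![1, 0] = b • ![0, 1] := by
  simp [scMul_A12]

theorem scMul_A12_e₁_e₂ (b : F) : scMul F (A12 b) ![1, 0] ![0, 1] = ![1, 0] := by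
  simp [scMul_A12]

theorem scMul_A12_e₂_e₂ (b : F) : scMul F (A12 b) ![0, 1] ![0, 1] = -![0, 1] := by
  simp [scMul_A12]

theorem exists_sq_mul_of_A12_relations (h2 : (2 : F) ≠ 0) {b b' : F} {u v : Fin 2 → F}
    (hu : u ≠ 0) (hv : v ≠ 0) (huu : scMul F (A12 b') u u = b • v)
    (huv : scMul F (A12 b') u v = u) (hvv : scMul F (A12 b') v v = -v) :
    ∃ t, t ≠ 0 ∧ b = t ^ 2 * b' := by
  have hu' : u 0 = 0 → u 1 ≠ 0 := fun h0 h1 => hu (by funext i; fin_cases i <;> simpa)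
  have hv' : v 0 = 0 → v 1 ≠ 0 := fun h0 h1 => hv (by funext i; fin_cases i <;> simpa)
  simp only [scMul_A12, funext_iff, Fin.forall_fin_two, Matrix.cons_val_zero, Matrix.cons_val_one,
    Matrix.cons_val_fin_one, Pi.smul_apply, smul_eq_mul, Pi.neg_apply] at huu huv hvv
  obtain ⟨huu0, huu1⟩ := huu
  obtain ⟨-, huv1⟩ := huv
  obtain ⟨hvv0, hvv1⟩ := hvv
  by_cases hv0 : v 0 = 0
  · have hv1 : v 1 = 1 := by
      have : v 1 * (v 1 - 1) = 0 := by rw [hv0] at hvv1; linear_combination -hvv1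
      exact sub_eq_zero.mp ((mul_eq_zero.mp this).resolve_left (hv' hv0))
    have hu1 : u 1 = 0 := by
      rw [hv0, hv1] at huv1
      exact (mul_eq_zero.mp (by linear_combination -huv1 : 2 * u 1 = 0)).resolve_left h2
    refine ⟨u 0, fun h => hu' h hu1, ?_⟩
    rw [hu1, hv1] at huu1
    linear_combination -huu1
  · have hv1 : 2 * v 1 + 1 = 0 :=
      (mul_eq_zero.mp (by linear_combination hvv0 : v 0 * (2 * v 1 + 1) = 0)).resolve_left hv0
    have hu1 : u 1 = 2 * b' * u 0 * v 0 := by linear_combination -2 * huv1 - u 1 * hv1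
    refine ⟨2 * u 0, mul_ne_zero h2 fun h => hu' h (by rw [hu1, h]; ring), ?_⟩
    have : v 0 * (b - (2 * u 0) ^ 2 * b') = 0 := by linear_combination -huu0 + 2 * u 0 * hu1
    exact sub_eq_zero.mp ((mul_eq_zero.mp this).resolve_left hv0)

theorem scIso_A12_of_eq_sq_mul {b b' t : F} (ht : t ≠ 0) (h : b = t ^ 2 * b') :
    scIso F (A12 b) (A12 b') := by
  refine ⟨.piCongrRight ![.smulOfNeZero F F t ht, .refl F F], fun x y => ?_⟩
  ext i; fin_cases i <;> simp [scMul_A12, h] <;> ring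

theorem scIso_A12_iff (h2 : (2 : F) ≠ 0) {b b' : F} :
    scIso F (A12 b) (A12 b') ↔ ∃ t, t ≠ 0 ∧ b = t ^ 2 * b' := by
  refine ⟨fun ⟨g, hg⟩ => ?_, fun ⟨t, ht, h⟩ => scIso_A12_of_eq_sq_mul ht h⟩
  have hg₁ : g ![1, 0] ≠ 0 := by simp
  have hg₂ : g ![0, 1] ≠ 0 := by simp
  refine exists_sq_mul_of_A12_relations h2 hg₁ hg₂ ?_ ?_ ?_ <;>
    simp only [← hg, scMul_A12_e₁_e₁, scMul_A12_e₁_e₂, scMul_A12_e₂_e₂, map_smul, map_neg]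

theorem exists_sq_mul_iff_quadraticChar_eq [Fintype F] [DecidableEq F] {b b' : F} :
    (∃ t, t ≠ 0 ∧ b = t ^ 2 * b') ↔ quadraticChar F b = quadraticChar F b' := by
  constructor
  · rintro ⟨t, ht, rfl⟩
    rw [map_mul, quadraticChar_sq_one' ht, one_mul]
  · intro h
    by_cases hb' : b' = 0
    · subst hb'
      rw [MulChar.map_zero, quadraticChar_eq_zero_iff] at h
      exact ⟨1, one_ne_zero, by simp [h]⟩
    have hb : b ≠ 0 := by
      rwa [Ne, ← quadraticChar_eq_zero_iff, h, quadraticChar_eq_zero_iff]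
    obtain ⟨s, hs⟩ : IsSquare (b * b') := by
      rw [← quadraticChar_one_iff_isSquare (mul_ne_zero hb hb'), map_mul, h, ← map_mul, ← sq,
        quadraticChar_sq_one' hb']
    refine ⟨s / b', div_ne_zero (fun h0 => ?_) hb', ?_⟩
    · simp [h0, hb, hb'] at hs
    · field_simp
      linear_combination hs

theorem card_range_quadraticChar [Fintype F] [DecidableEq F] (hF : ringChar F ≠ 2) :
    Nat.card (Set.range (quadraticChar F)) = 3 := by
  have : Set.range (quadraticChar F) = {0, 1, -1} := by
    ext z
    refine ⟨?_, ?_⟩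
    · rintro ⟨a, rfl⟩
      exact quadraticChar_isQuadratic F a
    · rintro (rfl | rfl | rfl)
      exacts [⟨0, MulChar.map_zero _⟩, ⟨1, map_one _⟩, quadraticChar_exists_neg_one hF]
  rw [this]
  simp

end

theorem count_A12_family_general (F : Type*) [Field F] [Fintype F]
    (h2 : ringChar F ≠ 2) :
    Nat.card (Quot (fun b b' : F =>
        scIso F !![0, 1, 1, 0; b, 0, 0, -1] !![0, 1, 1, 0; b', 0, 0, -1])) = 3 := by
  classical
  have hiso : (fun b b' : F => scIso F (A12 b) (A12 b')) =
      fun b b' => quadraticChar F b = quadraticChar F b' := by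
    ext b b'
    rw [scIso_A12_iff (Ring.two_ne_zero h2), exists_sq_mul_iff_quadraticChar_eq]
  rw [hiso, card_quot_eq_card_range, card_range_quadraticChar h2]

/-- The number of isomorphism classes in the family
`A₁₂(β₁) = (0,1,1,0; β₁,0,0,-1)`, `β₁ ∈ F`, is `3`. -/
theorem count_A12_family (F : Type*) [Field F] [Fintype F]
    (h2 : ringChar F ≠ 2) (h3 : ringChar F ≠ 3) :
    Nat.card (Quot (fun b b' : F =>
        scIso F !![0, 1, 1, 0; b, 0, 0, -1] !![0, 1, 1, 0; b', 0, 0, -1])) = 3 :=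
  count_A12_family_general F h2
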